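/- arXiv:1410.0276 — 6 statements merged into one kernel-verified Lean document; each statement's English description precedes it below -/
import Mathlib

section
/- Let G be the (h×r) grid graph, let t ≤ min(h,r) be an integer, let X be the set of vertices in the first column of G and Y the set of vertices in the last column of G. Then for any subsets X' ⊆ X and Y' ⊆ Y with |X'| = |Y'| ≤ t, there exist |X'| vertex-disjoint paths in G connecting the vertices of X' to the vertices of Y'. -/
/-!
Order the rows of `X'` as `a₀ < ⋯ < a_{k-1}` and those of `Y'` as `b₀ < ⋯ < b_{k-1}`. The `i`-th
path runs along row `aᵢ` up to some column `mᵢ`, then along column `mᵢ` to row `bᵢ`, then along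
row `bᵢ` to the last column. For `i < j` two such staircases can only meet when both paths go up
(`bⱼ ≤ aᵢ`) and `mⱼ ≤ mᵢ`, or both go down (`aⱼ ≤ bᵢ`) and `mᵢ ≤ mⱼ`. So it suffices to let the
upward paths turn in column `i` and the downward ones in column `k - 1 - i`, which needs only
`k ≤ r` columns.
-/

/-- The `(h × r)` grid graph on vertex set `Fin h × Fin r`: horizontal edges join
vertices in the same row with consecutive column indices, vertical edges join
vertices in the same column with consecutive row indices. -/
def gridGraph (h r : ℕ) : SimpleGraph (Fin h × Fin r) :=
  SimpleGraph.fromRel (fun a b =>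
    (a.1 = b.1 ∧ a.2.val + 1 = b.2.val) ∨ (a.2 = b.2 ∧ a.1.val + 1 = b.1.val))

open SimpleGraph

theorem gridGraph_eq_hasse (h r : ℕ) : gridGraph h r = hasse (Fin h × Fin r) := by
  rw [hasse_prod]
  change _ = pathGraph h □ pathGraph r
  ext u v
  simp only [gridGraph, fromRel_adj, boxProd_adj, pathGraph_adj, ne_eq, Prod.ext_iff, Fin.ext_iff]
  omega

theorem SimpleGraph.exists_hasse_walk_support_subset_uIcc {α : Type*} [LinearOrder α] [SuccOrder α]
    [IsSuccArchimedean α] (a b : α) :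
    ∃ p : (hasse α).Walk a b, ∀ v ∈ p.support, v ∈ Set.uIcc a b := by
  wlog hab : a ≤ b generalizing a b
  · obtain ⟨p, hp⟩ := this b a (le_of_not_ge hab)
    exact ⟨p.reverse, fun v hv => Set.uIcc_comm a b ▸ hp v (by simpa using hv)⟩
  rw [Set.uIcc_of_le hab]
  induction hab using Succ.rec with
  | rfl => exact ⟨.nil, by simp⟩
  | succ n hn ih =>
    obtain ⟨p, hp⟩ := ih
    by_cases hmax : IsMax n
    · rw [Order.succ_eq_iff_isMax.2 hmax]
      exact ⟨p, hp⟩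
    · have hadj : (hasse α).Adj n (Order.succ n) :=
        hasse_adj.2 (Or.inl (Order.covBy_succ_of_not_isMax hmax))
      refine ⟨p.concat hadj, fun v hv => ?_⟩
      rw [Walk.support_concat, List.mem_append, List.mem_singleton] at hv
      rcases hv with hv | rfl
      · exact Set.Icc_subset_Icc_right (Order.le_succ n) (hp v hv)
      · exact ⟨hn.trans (Order.le_succ n), le_rfl⟩

theorem SimpleGraph.Walk.support_boxProdLeft {α β : Type*} (G : SimpleGraph α)
    (H : SimpleGraph β) {a₁ a₂ : α} (b : β) (p : G.Walk a₁ a₂) :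
    (p.boxProdLeft H b).support = p.support.map (·, b) :=
  p.support_map _

theorem SimpleGraph.Walk.support_boxProdRight {α β : Type*} (G : SimpleGraph α)
    {H : SimpleGraph β} {b₁ b₂ : β} (a : α) (p : H.Walk b₁ b₂) :
    (p.boxProdRight G a).support = p.support.map (a, ·) :=
  p.support_map _

def staircase {α β : Type*} [LinearOrder α] [LinearOrder β] (a b : α) (m : β) : Set (α × β) :=
  {v | v.2 ≤ m ∧ v.1 = a ∨ v.2 = m ∧ v.1 ∈ Set.uIcc a b ∨ m ≤ v.2 ∧ v.1 = b}

theorem disjoint_staircase {α β : Type*} [LinearOrder α] [LinearOrder β] {a₁ a₂ b₁ b₂ : α}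
    {m₁ m₂ : β} (ha : a₁ < a₂) (hb : b₁ < b₂) (hup : b₂ ≤ a₁ → m₁ < m₂)
    (hdown : a₂ ≤ b₁ → m₂ < m₁) :
    Disjoint (staircase a₁ b₁ m₁) (staircase a₂ b₂ m₂) := by
  rw [Set.disjoint_left]
  rintro ⟨x, c⟩ h₁ h₂
  simp only [staircase, Set.mem_ofPred_eq, Set.mem_uIcc] at h₁ h₂
  grind

theorem exists_isPath_support_subset_staircase {h r : ℕ} (x y : Fin h × Fin r) (m : Fin r)
    (hxm : x.2 ≤ m) (hmy : m ≤ y.2) :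
    ∃ p : (gridGraph h r).Walk x y, p.IsPath ∧ ∀ v ∈ p.support, v ∈ staircase x.1 y.1 m := by
  obtain ⟨a, c₀⟩ := x
  obtain ⟨b, c₁⟩ := y
  rw [gridGraph_eq_hasse, hasse_prod]
  obtain ⟨p₁, hp₁⟩ := exists_hasse_walk_support_subset_uIcc c₀ m
  obtain ⟨p₂, hp₂⟩ := exists_hasse_walk_support_subset_uIcc a b
  obtain ⟨p₃, hp₃⟩ := exists_hasse_walk_support_subset_uIcc m c₁
  let q := (p₁.boxProdRight (hasse (Fin h)) a).append
    ((p₂.boxProdLeft (hasse (Fin r)) m).append (p₃.boxProdRight (hasse (Fin h)) b))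
  refine ⟨q.bypass, q.bypass_isPath, fun v hv => ?_⟩
  have hv := q.support_bypass_subset_support hv
  rw [Walk.mem_support_append_iff, Walk.mem_support_append_iff] at hv
  rcases hv with hv | hv | hv <;>
    simp only [Walk.support_boxProdLeft, Walk.support_boxProdRight, List.mem_map] at hv <;>
    obtain ⟨c, hc, rfl⟩ := hv
  · exact Or.inl ⟨(Set.uIcc_of_le hxm ▸ hp₁ c hc).2, rfl⟩
  · exact Or.inr (Or.inl ⟨rfl, hp₂ c hc⟩)
  · exact Or.inr (Or.inr ⟨(Set.uIcc_of_le hmy ▸ hp₃ c hc).1, rfl⟩)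

section Sweep

variable {k : ℕ} {α : Type*} [LinearOrder α] {a b : Fin k → α}

def sweepColumn (a b : Fin k → α) (i : Fin k) : Fin k :=
  if b i ≤ a i then i else i.rev

theorem sweepColumn_lt_of_le (ha : StrictMono a) (hb : StrictMono b) {i j : Fin k} (hij : i < j)
    (hji : b j ≤ a i) : sweepColumn a b i < sweepColumn a b j := by
  have hi : b i ≤ a i := (hb hij).le.trans hji
  have hj : b j ≤ a j := hji.trans (ha hij).le
  simpa [sweepColumn, hi, hj] using hij

theorem sweepColumn_lt_of_ge (ha : StrictMono a) (hb : StrictMono b) {i j : Fin k} (hij : i < j)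
    (hji : a j ≤ b i) : sweepColumn a b j < sweepColumn a b i := by
  have hi : ¬ b i ≤ a i := not_le.2 ((ha hij).trans_le hji)
  have hj : ¬ b j ≤ a j := not_le.2 (hji.trans_lt (hb hij))
  simpa [sweepColumn, hi, hj] using hij

end Sweep

theorem exists_disjoint_paths_of_strictMono {h r k : ℕ} (hkr : k ≤ r)
    (u w : Fin k → Fin h × Fin r) (hu : ∀ i, IsBot (u i).2) (hw : ∀ i, IsTop (w i).2)
    (hu_mono : StrictMono fun i => (u i).1) (hw_mono : StrictMono fun i => (w i).1) :
    ∃ P : ∀ i, (gridGraph h r).Walk (u i) (w i), (∀ i, (P i).IsPath) ∧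
      ∀ i j, i ≠ j → ∀ v ∈ (P i).support, v ∉ (P j).support := by
  let m i := Fin.castLE hkr (sweepColumn (fun i => (u i).1) (fun i => (w i).1) i)
  choose P hP hPm using fun i =>
    exists_isPath_support_subset_staircase (u i) (w i) (m i) (hu i _) (hw i _)
  refine ⟨P, hP, fun i j hij v hvi hvj => ?_⟩
  wlog hlt : i < j generalizing i j
  · exact this j i hij.symm hvj hvi (lt_of_le_of_ne (not_lt.1 hlt) hij.symm)
  have hdisj := disjoint_staircase (hu_mono hlt) (hw_mono hlt)
    (fun h => (Fin.castLE_lt_castLE_iff hkr).2 (sweepColumn_lt_of_le hu_mono hw_mono hlt h))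
    (fun h => (Fin.castLE_lt_castLE_iff hkr).2 (sweepColumn_lt_of_ge hu_mono hw_mono hlt h))
  exact Set.disjoint_left.1 hdisj (hPm i v hvi) (hPm j v hvj)

theorem Finset.exists_equiv_fin_strictMono_comp {α β : Type*} [LinearOrder β] (s : Finset α)
    {f : α → β} (hf : Set.InjOn f s) {n : ℕ} (hn : s.card = n) :
    ∃ e : Fin n ≃ s, StrictMono fun i => f (e i) := by
  let g : s → s.image f := fun x => ⟨f x, Finset.mem_image_of_mem f x.2⟩
  have hg : Function.Bijective g := by
    refine ⟨fun x y hxy => Subtype.ext (hf x.2 y.2 (congrArg Subtype.val hxy)), fun y => ?_⟩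
    obtain ⟨x, hx, hxy⟩ := Finset.mem_image.1 y.2
    exact ⟨⟨x, hx⟩, Subtype.ext hxy⟩
  let o := (s.image f).orderIsoOfFin ((Finset.card_image_of_injOn hf).trans hn)
  refine ⟨o.toEquiv.trans (Equiv.ofBijective g hg).symm, fun i j hij => ?_⟩
  have hfo : ∀ i, f ((Equiv.ofBijective g hg).symm (o i)) = o i := fun i =>
    congrArg Subtype.val ((Equiv.ofBijective g hg).apply_symm_apply (o i))
  change f ((Equiv.ofBijective g hg).symm (o i)) < f ((Equiv.ofBijective g hg).symm (o j))
  rw [hfo, hfo]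
  exact o.strictMono hij

theorem grid_t_linked_general (h r t : ℕ) (htr : t ≤ r)
    (X' Y' : Finset (Fin h × Fin r))
    (hX : ∀ x ∈ X', x.2.val = 0) (hY : ∀ y ∈ Y', y.2.val = r - 1)
    (hcard : X'.card = Y'.card) (hle : X'.card ≤ t) :
    ∃ (σ : ↥X' ≃ ↥Y') (P : ∀ x : ↥X', (gridGraph h r).Walk (x : Fin h × Fin r) ((σ x : Fin h × Fin r))),
      (∀ x, (P x).IsPath) ∧
      (∀ x y, x ≠ y → ∀ v, v ∈ (P x).support → v ∉ (P y).support) := by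
  have hrow_inj : ∀ {s : Finset (Fin h × Fin r)} {c : ℕ}, (∀ x ∈ s, x.2.val = c) →
      Set.InjOn Prod.fst (s : Set (Fin h × Fin r)) := fun hs x hx y hy hxy =>
    Prod.ext hxy (Fin.ext ((hs x hx).trans (hs y hy).symm))
  obtain ⟨eX, heX⟩ := X'.exists_equiv_fin_strictMono_comp (hrow_inj hX) rfl
  obtain ⟨eY, heY⟩ := Y'.exists_equiv_fin_strictMono_comp (hrow_inj hY) hcard.symm
  obtain ⟨P, hP, hPdisj⟩ := exists_disjoint_paths_of_strictMono (hle.trans htr)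
    (fun i => (eX i : Fin h × Fin r)) (fun i => (eY i : Fin h × Fin r))
    (fun i c => Fin.le_def.2 (by simp [hX _ (eX i).2]))
    (fun i c => Fin.le_def.2 (by rw [hY _ (eY i).2]; omega)) heX heY
  refine ⟨eX.symm.trans eY, fun x => (P (eX.symm x)).copy (by simp) (by simp),
    fun x => (Walk.isPath_copy _ _ _).2 (hP _), fun x y hxy v hvx hvy => ?_⟩
  exact hPdisj _ _ (eX.symm.injective.ne hxy) v (by simpa using hvx) (by simpa using hvy)

/-- In the `(h × r)` grid, for any `t ≤ min(h, r)`, any subsets `X'` of the first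
column and `Y'` of the last column with `|X'| = |Y'| ≤ t` can be linked by
`|X'|` vertex-disjoint paths (a bijection `σ : X' ≃ Y'` together with pairwise
vertex-disjoint paths from each `x ∈ X'` to `σ x ∈ Y'`). -/
theorem grid_t_linked (h r t : ℕ) (hth : t ≤ h) (htr : t ≤ r)
    (X' Y' : Finset (Fin h × Fin r))
    (hX : ∀ x ∈ X', x.2.val = 0) (hY : ∀ y ∈ Y', y.2.val = r - 1)
    (hcard : X'.card = Y'.card) (hle : X'.card ≤ t) :
    ∃ (σ : ↥X' ≃ ↥Y') (P : ∀ x : ↥X', (gridGraph h r).Walk (x : Fin h × Fin r) ((σ x : Fin h × Fin r))),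
      (∀ x, (P x).IsPath) ∧
      (∀ x y, x ≠ y → ∀ v, v ∈ (P x).support → v ∉ (P y).support) :=
  grid_t_linked_general h r t htr X' Y' hX hY hcard hle
end

section
/- Let D be a finite directed graph in which every vertex has out-degree at most 1 and whose underlying undirected graph is a forest. Then there exists a subset E* of the edges of D with |E*| ≥ |E(D)|/2 such that for every vertex v of D, E* does not simultaneously contain an edge leaving v and an edge entering v. -/
/-! A forest is bipartite, so its vertices can be properly coloured with two colours. The edges
whose tail has the more frequent tail colour make up at least half of all edges, and each of
their heads has the other colour, hence is never a tail of one of them. -/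

open Finset

theorem Finset.exists_card_le_mul_card_filter_eq {ι κ : Type*} [Fintype κ] [Nonempty κ]
    [DecidableEq κ] (s : Finset ι) (f : ι → κ) :
    ∃ k, #s ≤ Fintype.card κ * #{x ∈ s | f x = k} := by
  have hκ : (0 : ℚ) < Fintype.card κ := by exact_mod_cast Fintype.card_pos
  obtain ⟨k, -, hk⟩ := exists_le_card_fiber_of_nsmul_le_card_of_maps_to
    (fun a _ => mem_univ (f a)) univ_nonempty (b := (#s / Fintype.card κ : ℚ))
    (by rw [card_univ, nsmul_eq_mul, mul_div_cancel₀ _ hκ.ne'])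
  refine ⟨k, ?_⟩
  rw [div_le_iff₀' hκ] at hk
  exact_mod_cast hk

theorem not_tail_and_head_of_filter_tail_color {V α : Type*} [DecidableEq α]
    {E : Finset (V × V)} {c : V → α} (hc : ∀ e ∈ E, c e.1 ≠ c e.2) (a : α) (v : V) :
    ¬ ((∃ w, (v, w) ∈ {e ∈ E | c e.1 = a}) ∧ ∃ u, (u, v) ∈ {e ∈ E | c e.1 = a}) := by
  rintro ⟨⟨w, hw⟩, u, hu⟩
  rw [mem_filter] at hw hu
  exact hc _ hu.1 (hu.2.trans hw.2.symm)

theorem arborescence_parity_edge_selection_general {V : Type*}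
    (E : Finset (V × V))
    (h_loop : ∀ e ∈ E, e.1 ≠ e.2)
    (h_forest : (SimpleGraph.fromRel (fun a b => (a, b) ∈ E)).IsAcyclic) :
    ∃ E' ⊆ E, E.card ≤ 2 * E'.card ∧
      ∀ v : V, ¬ ((∃ w, (v, w) ∈ E') ∧ (∃ u, (u, v) ∈ E')) := by
  let c := h_forest.coloringTwo
  have hc : ∀ e ∈ E, c e.1 ≠ c e.2 := fun e he =>
    c.valid ((SimpleGraph.fromRel_adj _ _ _).2 ⟨h_loop e he, Or.inl he⟩)
  obtain ⟨k, hk⟩ := exists_card_le_mul_card_filter_eq E (c ·.1)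
  exact ⟨{e ∈ E | c e.1 = k}, filter_subset _ _, by simpa using hk,
    not_tail_and_head_of_filter_tail_color hc k⟩

/-- Let `D` be a finite directed graph (edge set `E`, no self-loops) in which every
vertex has out-degree at most `1` and whose underlying undirected graph is a
forest. Then there is a subset `E'` of the edges with `|E'| ≥ |E| / 2` such that
no vertex simultaneously has an edge of `E'` leaving it and an edge of `E'`
entering it. -/
theorem arborescence_parity_edge_selection {V : Type*} [Fintype V] [DecidableEq V]
    (E : Finset (V × V))
    (h_loop : ∀ e ∈ E, e.1 ≠ e.2)
    (h_out : ∀ u v w : V, (u, v) ∈ E → (u, w) ∈ E → v = w)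
    (h_forest : (SimpleGraph.fromRel (fun a b => (a, b) ∈ E)).IsAcyclic) :
    ∃ E' ⊆ E, E.card ≤ 2 * E'.card ∧
      ∀ v : V, ¬ ((∃ w, (v, w) ∈ E') ∧ (∃ u, (u, v) ∈ E')) :=
  arborescence_parity_edge_selection_general E h_loop h_forest
end

section
/- Let H be a finite graph, let X and Y be disjoint vertex subsets of H, and suppose there exist k vertex-disjoint paths in H connecting X to Y. Let X' ⊆ X, and suppose there exist k−1 vertex-disjoint paths connecting X' to Y, each internally disjoint from X ∪ Y. Then there exist k vertex-disjoint paths connecting X to Y, each internally disjoint from X ∪ Y, such that at least k−1 of these paths have an endpoint in X'. -/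
/-!
Trim the `k` given paths to `X`–`Y` paths (paths meeting `X` and `Y` only in their ends) and
improve this family `P` against the family `Q` of the `k - 1` paths from `X'`. While some `q ∈ Q`
starts at a vertex where no path of `P` starts, either `q` avoids `P`, and we set `q` and any path
of `P` aside and recurse, or we follow `q` up to its first vertex `w` on some `p ∈ P` and then `p`
from `w` on. The new path replaces `p` and strictly decreases the number of edges of `P` not on
`Q`: were all edges of `p` before `w` on `Q`, they would lie on a single path of `Q`, namely `q`,
and `p` would start where `q` starts.
-/

namespace SimpleGraph

open Function

variable {V : Type*} {G : SimpleGraph V}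

namespace Walk

variable {u v w : V}

lemma IsPath.append {p : G.Walk u v} {q : G.Walk v w} (hp : p.IsPath) (hq : q.IsPath)
    (hpq : ∀ x ∈ p.support, x ∈ q.support → x = v) : (p.append q).IsPath := by
  rw [isPath_def, support_append, List.nodup_append]
  refine ⟨hp.support_nodup, hq.support_nodup.sublist (List.tail_sublist _), ?_⟩
  rintro x hxp _ hxq rfl
  have hv : v ∉ q.support.tail := by
    have hnd := hq.support_nodup
    rw [← cons_tail_support q] at hnd
    exact (List.nodup_cons.mp hnd).1
  exact hv (hpq x hxp (List.mem_of_mem_tail hxq) ▸ hxq)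

variable [DecidableEq V]

lemma IsPath.eq_of_mem_takeUntil_of_mem_dropUntil {p : G.Walk u v} (hp : p.IsPath)
    (hw : w ∈ p.support) {x : V} (hx₁ : x ∈ (p.takeUntil w hw).support)
    (hx₂ : x ∈ (p.dropUntil w hw).support) : x = w := by
  by_contra hxw
  have hp' : ((p.takeUntil w hw).append (p.dropUntil w hw)).IsPath := (p.take_spec hw).symm ▸ hp
  exact hp'.ne_of_mem_support_of_append hxw hx₁ hx₂ rfl

lemma exists_first_mem (p : G.Walk u v) {U : Set V} (h : ∃ x ∈ p.support, x ∈ U) :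
    ∃ x ∈ U, ∃ hx : x ∈ p.support, ∀ y ∈ (p.takeUntil x hx).support, y ∈ U → y = x := by
  classical
  obtain ⟨x, hxs, hx, hfirst⟩ :=
    p.exists_mem_support_forall_mem_support_imp_eq {y ∈ p.support.toFinset | y ∈ U}
      (by obtain ⟨x, hx, hxU⟩ := h; exact ⟨x, by simp [hx, hxU]⟩)
  refine ⟨x, (Finset.mem_filter.mp hxs).2, hx, fun y hy hyU => hfirst y ?_ hy⟩
  exact Finset.mem_filter.mpr
    ⟨List.mem_toFinset.mpr (p.support_takeUntil_subset_support hx hy), hyU⟩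

end Walk

/-- An `A`–`B` path in Diestel's sense. -/
structure ABPath (G : SimpleGraph V) (A B : Set V) where
  start : V
  finish : V
  walk : G.Walk start finish
  isPath : walk.IsPath
  start_mem : start ∈ A
  finish_mem : finish ∈ B
  eq_start_of_mem : ∀ x ∈ walk.support, x ∈ A → x = start
  eq_finish_of_mem : ∀ x ∈ walk.support, x ∈ B → x = finish

namespace ABPath

variable {A B : Set V}

def verts (p : G.ABPath A B) : Set V := {x | x ∈ p.walk.support}

lemma start_mem_verts (p : G.ABPath A B) : p.start ∈ p.verts := p.walk.start_mem_support

lemma eq_start_or_eq_finish (p : G.ABPath A B) {x : V} (hx : x ∈ p.walk.support)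
    (hxAB : x ∈ A ∪ B) :
    x = p.start ∨ x = p.finish :=
  hxAB.imp (p.eq_start_of_mem x hx) (p.eq_finish_of_mem x hx)

def ofInternallyDisjoint (hAB : Disjoint A B) {u v : V} (p : G.Walk u v) (hp : p.IsPath)
    (hu : u ∈ A) (hv : v ∈ B) (hinner : ∀ x ∈ p.support, x ∈ A ∪ B → x = u ∨ x = v) :
    G.ABPath A B where
  start := u
  finish := v
  walk := p
  isPath := hp
  start_mem := hu
  finish_mem := hv
  eq_start_of_mem x hx hxA :=
    (hinner x hx (.inl hxA)).resolve_right fun hxv => hAB.ne_of_mem hxA hv hxv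
  eq_finish_of_mem x hx hxB :=
    (hinner x hx (.inr hxB)).resolve_left fun hxu => hAB.ne_of_mem hu hxB hxu.symm

lemma exists_verts_subset {u v : V} (p : G.Walk u v) (hp : p.IsPath) (hu : u ∈ A) (hv : v ∈ B) :
    ∃ q : G.ABPath A B, q.verts ⊆ {x | x ∈ p.support} := by
  classical
  induction hn : p.length using Nat.strong_induction_on generalizing u v with
  | _ n ih =>
  subst hn
  by_cases hB : ∃ x ∈ p.support, x ∈ B ∧ x ≠ v
  · obtain ⟨x, hx, hxB, hxv⟩ := hB
    obtain ⟨q, hq⟩ := ih _ (p.length_takeUntil_lt_length hx hxv) (p.takeUntil x hx)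
      (hp.takeUntil hx) hu hxB rfl
    exact ⟨q, hq.trans fun y hy => p.support_takeUntil_subset_support hx hy⟩
  by_cases hA : ∃ x ∈ p.support, x ∈ A ∧ x ≠ u
  · obtain ⟨x, hx, hxA, hxu⟩ := hA
    obtain ⟨q, hq⟩ := ih _ (p.length_dropUntil_lt_length hx hxu) (p.dropUntil x hx)
      (hp.dropUntil hx) hxA hv rfl
    exact ⟨q, hq.trans fun y hy => p.support_dropUntil_subset_support hx hy⟩
  push Not at hA hB
  exact ⟨⟨u, v, p, hp, hu, hv, hA, hB⟩, subset_rfl⟩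

lemma notMem_of_forall_disjoint {P : Finset (G.ABPath A B)} {p : G.ABPath A B}
    (h : ∀ p' ∈ P, Disjoint p.verts p'.verts) : p ∉ P := fun hp =>
  Set.disjoint_left.mp (h p hp) p.start_mem_verts p.start_mem_verts

lemma injective_of_pairwise_disjoint {ι : Type*} {P : ι → G.ABPath A B}
    (hP : Pairwise (Disjoint on fun i => (P i).verts)) : Injective P := by
  intro i j hij
  by_contra hne
  exact Set.disjoint_left.mp (hP hne) (P i).start_mem_verts (hij ▸ (P i).start_mem_verts)

lemma eq_of_mem_edges {P : Finset (G.ABPath A B)}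
    (hP : (P : Set (G.ABPath A B)).PairwiseDisjoint verts) {p p' : G.ABPath A B} (hp : p ∈ P)
    (hp' : p' ∈ P) {e : Sym2 V} (he : e ∈ p.walk.edges) (he' : e ∈ p'.walk.edges) : p = p' := by
  induction e using Sym2.ind with
  | _ x y =>
    exact hP.elim_set hp hp' x (p.walk.fst_mem_support_of_mem_edges he)
      (p'.walk.fst_mem_support_of_mem_edges he')

lemma support_subset_verts {Q : Finset (G.ABPath A B)}
    (hQ : (Q : Set (G.ABPath A B)).PairwiseDisjoint verts) {q : G.ABPath A B} (hq : q ∈ Q)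
    {u v : V} (c : G.Walk u v) (hu : u ∈ q.verts)
    (hc : ∀ e ∈ c.edges, ∃ q' ∈ Q, e ∈ q'.walk.edges) : ∀ x ∈ c.support, x ∈ q.verts := by
  induction c with
  | nil => simpa using hu
  | cons hadj c ih =>
    obtain ⟨q', hq', he⟩ := hc _ List.mem_cons_self
    obtain rfl : q' = q := hQ.elim_set hq' hq _ (q'.walk.fst_mem_support_of_mem_edges he) hu
    intro x hx
    rcases List.mem_cons.mp hx with rfl | hx
    · exact hu
    · exact ih (q'.walk.snd_mem_support_of_mem_edges he)
        (fun e he => hc e (List.mem_cons_of_mem _ he)) x hx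

section splice

variable [DecidableEq V]

def splice (q p : G.ABPath A B) {w : V} (hq : w ∈ q.walk.support) (hp : w ∈ p.walk.support)
    (hqp : ∀ x ∈ (q.walk.takeUntil w hq).support, x ∈ p.walk.support → x = w) :
    G.ABPath A B where
  start := q.start
  finish := p.finish
  walk := (q.walk.takeUntil w hq).append (p.walk.dropUntil w hp)
  isPath := (q.isPath.takeUntil hq).append (p.isPath.dropUntil hp) fun x hx hx' =>
    hqp x hx (p.walk.support_dropUntil_subset_support hp hx')
  start_mem := q.start_mem
  finish_mem := p.finish_mem
  eq_start_of_mem x hx hxA := by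
    rcases (Walk.mem_support_append_iff _ _).mp hx with hx | hx
    · exact q.eq_start_of_mem x (q.walk.support_takeUntil_subset_support hq hx) hxA
    · obtain rfl := p.eq_start_of_mem x (p.walk.support_dropUntil_subset_support hp hx) hxA
      obtain rfl := p.isPath.eq_of_mem_takeUntil_of_mem_dropUntil hp
        (p.walk.takeUntil _ hp).start_mem_support hx
      exact q.eq_start_of_mem _ hq hxA
  eq_finish_of_mem x hx hxB := by
    rcases (Walk.mem_support_append_iff _ _).mp hx with hx | hx
    · obtain rfl := q.eq_finish_of_mem x (q.walk.support_takeUntil_subset_support hq hx) hxB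
      obtain rfl := q.isPath.eq_of_mem_takeUntil_of_mem_dropUntil hq hx
        (q.walk.dropUntil _ hq).end_mem_support
      exact p.eq_finish_of_mem _ hp hxB
    · exact p.eq_finish_of_mem x (p.walk.support_dropUntil_subset_support hp hx) hxB

variable {q p : G.ABPath A B} {w : V} {hq : w ∈ q.walk.support} {hp : w ∈ p.walk.support}
  {hqp : ∀ x ∈ (q.walk.takeUntil w hq).support, x ∈ p.walk.support → x = w}

lemma mem_verts_splice {x : V} (hx : x ∈ (splice q p hq hp hqp).verts) :
    x ∈ (q.walk.takeUntil w hq).support ∨ x ∈ (p.walk.dropUntil w hp).support :=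
  (Walk.mem_support_append_iff _ _).mp hx

lemma mem_edges_splice {e : Sym2 V} (he : e ∈ (splice q p hq hp hqp).walk.edges) :
    e ∈ (q.walk.takeUntil w hq).edges ∨ e ∈ (p.walk.dropUntil w hp).edges := by
  simpa [splice] using he

end splice

open Finset

structure IsRerouting (P Q R : Finset (G.ABPath A B)) : Prop where
  card_eq : R.card = P.card
  pairwiseDisjoint : (R : Set (G.ABPath A B)).PairwiseDisjoint verts
  verts_subset : ∀ r ∈ R, ∀ x ∈ r.verts, (∃ p ∈ P, x ∈ p.verts) ∨ ∃ q ∈ Q, x ∈ q.verts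

namespace IsRerouting

variable {P Q R S : Finset (G.ABPath A B)}

lemma refl (hP : (P : Set (G.ABPath A B)).PairwiseDisjoint verts) : IsRerouting P Q P :=
  ⟨rfl, hP, fun _ hp _ hx => .inl ⟨_, hp, hx⟩⟩

lemma trans (h₁ : IsRerouting P Q R) (h₂ : IsRerouting R Q S) : IsRerouting P Q S where
  card_eq := h₂.card_eq.trans h₁.card_eq
  pairwiseDisjoint := h₂.pairwiseDisjoint
  verts_subset s hs x hx := (h₂.verts_subset s hs x hx).elim
    (fun ⟨r, hr, hxr⟩ => h₁.verts_subset r hr x hxr) .inr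

lemma insert [DecidableEq (G.ABPath A B)] {p q : G.ABPath A B}
    (h : IsRerouting (P.erase p) (Q.erase q) R) (hp : p ∈ P) (hq : q ∈ Q)
    (hQ : (Q : Set (G.ABPath A B)).PairwiseDisjoint verts)
    (hqP : ∀ x ∈ q.verts, ∀ p' ∈ P, x ∉ p'.verts) : IsRerouting P Q (insert q R) := by
  have hqR : ∀ r ∈ R, Disjoint q.verts r.verts := by
    refine fun r hr => Set.disjoint_left.mpr fun x hxq hxr => ?_
    rcases h.verts_subset r hr x hxr with ⟨p', hp', hx⟩ | ⟨q', hq', hx⟩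
    · exact hqP x hxq p' (mem_of_mem_erase hp') hx
    · exact Set.disjoint_left.mp
        (hQ hq (mem_of_mem_erase hq') (ne_of_mem_erase hq').symm) hxq hx
  refine ⟨?_, ?_, fun r hr x hx => ?_⟩
  · rw [card_insert_of_notMem (notMem_of_forall_disjoint hqR), h.card_eq, card_erase_add_one hp]
  · rw [coe_insert]
    exact h.pairwiseDisjoint.insert fun r hr _ => hqR r hr
  · rcases mem_insert.mp hr with rfl | hr
    · exact .inr ⟨r, hq, hx⟩
    · exact (h.verts_subset r hr x hx).imp (fun ⟨p', hp', hx⟩ => ⟨p', mem_of_mem_erase hp', hx⟩)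
        fun ⟨q', hq', hx⟩ => ⟨q', mem_of_mem_erase hq', hx⟩

end IsRerouting

def unsharedEdges (P Q : Finset (G.ABPath A B)) : Set (Sym2 V) :=
  {e | (∃ p ∈ P, e ∈ p.walk.edges) ∧ ∀ q ∈ Q, e ∉ q.walk.edges}

lemma finite_unsharedEdges (P Q : Finset (G.ABPath A B)) : (unsharedEdges P Q).Finite :=
  (P.finite_toSet.biUnion fun p _ => p.walk.edges.finite_toSet).subset
    fun _ ⟨⟨_, hp, he⟩, _⟩ => Set.mem_biUnion hp he

lemma unsharedEdges_insert_erase_ssubset [DecidableEq (G.ABPath A B)] {P Q : Finset (G.ABPath A B)}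
    (hP : (P : Set (G.ABPath A B)).PairwiseDisjoint verts) {p s : G.ABPath A B} (hp : p ∈ P)
    (hs : ∀ e ∈ s.walk.edges, e ∈ p.walk.edges ∨ ∃ q ∈ Q, e ∈ q.walk.edges) {e : Sym2 V}
    (he : e ∈ unsharedEdges P Q) (hep : e ∈ p.walk.edges) (hes : e ∉ s.walk.edges) :
    unsharedEdges (insert s (P.erase p)) Q ⊂ unsharedEdges P Q := by
  refine ⟨fun e' ⟨⟨p', hp', he'⟩, he'Q⟩ => ⟨?_, he'Q⟩, fun hsub => ?_⟩
  · rcases mem_insert.mp hp' with rfl | hp'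
    · exact (hs e' he').elim (fun he' => ⟨p, hp, he'⟩) fun ⟨q, hq, he'q⟩ => (he'Q q hq he'q).elim
    · exact ⟨p', mem_of_mem_erase hp', he'⟩
  obtain ⟨⟨p', hp', he'⟩, -⟩ := hsub he
  rcases mem_insert.mp hp' with rfl | hp'
  · exact hes he'
  · exact ne_of_mem_erase hp' (eq_of_mem_edges hP (mem_of_mem_erase hp') hp he' hep)

lemma exists_isRerouting_ncard_unsharedEdges_lt {P Q : Finset (G.ABPath A B)}
    (hP : (P : Set (G.ABPath A B)).PairwiseDisjoint verts)
    (hQ : (Q : Set (G.ABPath A B)).PairwiseDisjoint verts) {q : G.ABPath A B} (hq : q ∈ Q)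
    (hq_start : ∀ p ∈ P, p.start ≠ q.start) (hmeet : ∃ x ∈ q.verts, ∃ p ∈ P, x ∈ p.verts) :
    ∃ P' : Finset (G.ABPath A B), IsRerouting P Q P' ∧
      (unsharedEdges P' Q).ncard < (unsharedEdges P Q).ncard := by
  classical
  obtain ⟨w, ⟨p, hp, hwp⟩, hwq, hfirst⟩ := q.walk.exists_first_mem hmeet
  set s := splice q p hwq hwp fun x hx hxp => hfirst x hx ⟨p, hp, hxp⟩
  have hs : ∀ p' ∈ P.erase p, Disjoint s.verts p'.verts := by
    intro p' hp'
    have hpp' := hP hp (mem_of_mem_erase hp') (ne_of_mem_erase hp').symm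
    refine Set.disjoint_left.mpr fun x hx hx' => Set.disjoint_left.mp hpp' ?_ hx'
    rcases mem_verts_splice hx with hx | hx
    · exact hfirst x hx ⟨p', mem_of_mem_erase hp', hx'⟩ ▸ hwp
    · exact p.walk.support_dropUntil_subset_support hwp hx
  -- the first segment of `p` cannot run along `Q`: it would lie on `q`, so `p` would start on `q`
  obtain ⟨e, hep, heQ⟩ :
      ∃ e ∈ (p.walk.takeUntil w hwp).edges, ∀ q' ∈ Q, e ∉ q'.walk.edges := by
    by_contra! h
    have := support_subset_verts hQ hq (p.walk.takeUntil w hwp).reverse hwq (by simpa using h)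
      p.start (by simp)
    exact hq_start p hp (q.eq_start_of_mem _ this p.start_mem)
  have hes : e ∉ s.walk.edges := fun he => (mem_edges_splice he).elim
    (fun he => heQ q hq (q.walk.edges_takeUntil_subset_edges hwq he))
    (p.isPath.isTrail.disjoint_edges_takeUntil_dropUntil hwp hep)
  have hs_edges : ∀ e ∈ s.walk.edges, e ∈ p.walk.edges ∨ ∃ q' ∈ Q, e ∈ q'.walk.edges :=
    fun e he => (mem_edges_splice he).symm.imp (p.walk.edges_dropUntil_subset_edges hwp ·)
      fun he => ⟨q, hq, q.walk.edges_takeUntil_subset_edges hwq he⟩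
  have hep' := p.walk.edges_takeUntil_subset_edges hwp hep
  refine ⟨insert s (P.erase p), ⟨?_, ?_, fun r hr x hx => ?_⟩, Set.ncard_lt_ncard
    (unsharedEdges_insert_erase_ssubset hP hp hs_edges ⟨⟨p, hp, hep'⟩, heQ⟩ hep' hes)
    (finite_unsharedEdges P Q)⟩
  · rw [card_insert_of_notMem (notMem_of_forall_disjoint hs), card_erase_add_one hp]
  · rw [coe_insert, coe_erase]
    exact (hP.subset Set.sdiff_subset).insert fun p' hp' _ =>
      hs p' (mem_erase.mpr ⟨hp'.2, hp'.1⟩)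
  · rcases mem_insert.mp hr with rfl | hr
    · exact (mem_verts_splice hx).symm.imp
        (fun hx => ⟨p, hp, p.walk.support_dropUntil_subset_support hwp hx⟩)
        fun hx => ⟨q, hq, q.walk.support_takeUntil_subset_support hwq hx⟩
    · exact .inl ⟨r, mem_of_mem_erase hr, hx⟩

theorem exists_isRerouting_forall_exists_start_eq (P Q : Finset (G.ABPath A B))
    (hP : (P : Set (G.ABPath A B)).PairwiseDisjoint verts)
    (hQ : (Q : Set (G.ABPath A B)).PairwiseDisjoint verts) (hcard : Q.card ≤ P.card) :
    ∃ R, IsRerouting P Q R ∧ ∀ q ∈ Q, ∃ r ∈ R, r.start = q.start := by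
  classical
  induction hn : Q.card using Nat.strong_induction_on generalizing P Q with
  | _ n ihn =>
  induction hN : (unsharedEdges P Q).ncard using Nat.strong_induction_on generalizing P with
  | _ N ihN =>
  by_cases hcov : ∀ q ∈ Q, ∃ p ∈ P, p.start = q.start
  · exact ⟨P, .refl hP, hcov⟩
  push Not at hcov
  obtain ⟨q, hq, hq_start⟩ := hcov
  by_cases hmeet : ∃ x ∈ q.verts, ∃ p ∈ P, x ∈ p.verts
  · obtain ⟨P', hPP', hlt⟩ := exists_isRerouting_ncard_unsharedEdges_lt hP hQ hq hq_start hmeet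
    obtain ⟨R, hP'R, hcover⟩ :=
      ihN _ (hN ▸ hlt) P' hPP'.pairwiseDisjoint (hPP'.card_eq ▸ hcard) rfl
    exact ⟨R, hPP'.trans hP'R, hcover⟩
  push Not at hmeet
  obtain ⟨p, hp⟩ : P.Nonempty := card_pos.mp ((card_pos.mpr ⟨q, hq⟩).trans_le hcard)
  obtain ⟨R, hR, hcover⟩ := ihn _ (hn ▸ card_erase_lt_of_mem hq) (P.erase p) (Q.erase q)
    (hP.subset (by simp)) (hQ.subset (by simp))
    (by rw [card_erase_of_mem hp, card_erase_of_mem hq]; omega) rfl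
  refine ⟨insert q R, hR.insert hp hq hQ hmeet, fun q' hq' => ?_⟩
  by_cases hq'q : q' = q
  · exact ⟨q, mem_insert_self q R, by rw [hq'q]⟩
  · obtain ⟨r, hr, hrq'⟩ := hcover q' (mem_erase.mpr ⟨hq'q, hq'⟩)
    exact ⟨r, mem_insert_of_mem hr, hrq'⟩

lemma pairwiseDisjoint_image_univ {ι : Type*} [Fintype ι] [DecidableEq (G.ABPath A B)]
    {F : ι → G.ABPath A B} (hF : Pairwise (Disjoint on fun i => (F i).verts)) :
    ((univ.image F : Finset _) : Set (G.ABPath A B)).PairwiseDisjoint verts := by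
  rw [coe_image, coe_univ, Set.image_univ]
  rintro _ ⟨i, rfl⟩ _ ⟨j, rfl⟩ hne
  exact hF (ne_of_apply_ne F hne)

theorem exists_pairwise_disjoint_forall_exists_start_eq {ι κ : Type*} [Fintype ι] [Fintype κ]
    (P : ι → G.ABPath A B) (Q : κ → G.ABPath A B)
    (hP : Pairwise (Disjoint on fun i => (P i).verts))
    (hQ : Pairwise (Disjoint on fun j => (Q j).verts)) (hcard : Fintype.card κ ≤ Fintype.card ι) :
    ∃ R : ι → G.ABPath A B, Pairwise (Disjoint on fun i => (R i).verts) ∧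
      ∀ j, ∃ i, (R i).start = (Q j).start := by
  classical
  have hPcard : (univ.image P).card = Fintype.card ι :=
    card_image_of_injective _ (injective_of_pairwise_disjoint hP)
  obtain ⟨R, hR, hcover⟩ := exists_isRerouting_forall_exists_start_eq (univ.image P)
    (univ.image Q) (pairwiseDisjoint_image_univ hP) (pairwiseDisjoint_image_univ hQ)
    (by rw [hPcard]; exact card_image_le.trans hcard)
  let e : ι ≃ R := Fintype.equivOfCardEq (by rw [Fintype.card_coe, hR.card_eq, hPcard])
  refine ⟨fun i => e i, fun i j hij => hR.pairwiseDisjoint (e i).2 (e j).2 ?_, fun j => ?_⟩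
  · exact fun h => hij (e.injective (Subtype.ext h))
  · obtain ⟨r, hr, hrq⟩ := hcover (Q j) (mem_image_of_mem _ (mem_univ j))
    exact ⟨e.symm ⟨r, hr⟩, by simpa using hrq⟩

end ABPath

end SimpleGraph

/-- Rerouting lemma: if `H` has `k` vertex-disjoint paths connecting `X` to `Y`,
and `k - 1` vertex-disjoint paths connecting `X' ⊆ X` to `Y`, each internally
disjoint from `X ∪ Y`, then `H` has `k` vertex-disjoint paths connecting `X` to
`Y`, each internally disjoint from `X ∪ Y`, of which at least `k - 1` start in
`X'`. -/
theorem reroute_paths {V : Type*} (H : SimpleGraph V) (X Y : Set V)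
    (hXY : Disjoint X Y) (k : ℕ)
    -- k disjoint paths connecting X to Y
    (a b : Fin k → V) (P : ∀ i, H.Walk (a i) (b i))
    (ha : ∀ i, a i ∈ X) (hb : ∀ i, b i ∈ Y)
    (hpath : ∀ i, (P i).IsPath)
    (hdisj : ∀ i j, i ≠ j → ∀ v, v ∈ (P i).support → v ∉ (P j).support)
    -- k - 1 disjoint paths connecting X' to Y, internally disjoint from X ∪ Y
    (X' : Set V) (hX'sub : X' ⊆ X)
    (a' b' : Fin (k - 1) → V) (P' : ∀ i, H.Walk (a' i) (b' i))
    (ha' : ∀ i, a' i ∈ X') (hb' : ∀ i, b' i ∈ Y)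
    (hpath' : ∀ i, (P' i).IsPath)
    (hdisj' : ∀ i j, i ≠ j → ∀ v, v ∈ (P' i).support → v ∉ (P' j).support)
    (hint' : ∀ i, ∀ v ∈ (P' i).support, v ∈ X ∪ Y → v = a' i ∨ v = b' i) :
    -- conclusion
    ∃ (c d : Fin k → V) (Q : ∀ i, H.Walk (c i) (d i)),
      (∀ i, c i ∈ X) ∧ (∀ i, d i ∈ Y) ∧
      (∀ i, (Q i).IsPath) ∧
      (∀ i j, i ≠ j → ∀ v, v ∈ (Q i).support → v ∉ (Q j).support) ∧
      (∀ i, ∀ v ∈ (Q i).support, v ∈ X ∪ Y → v = c i ∨ v = d i) ∧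
      ∃ s : Finset (Fin k), k - 1 ≤ s.card ∧ ∀ i ∈ s, c i ∈ X' := by
  choose T hT using fun i => SimpleGraph.ABPath.exists_verts_subset (P i) (hpath i) (ha i) (hb i)
  let T' i :=
    SimpleGraph.ABPath.ofInternallyDisjoint hXY (P' i) (hpath' i) (hX'sub (ha' i)) (hb' i) (hint' i)
  obtain ⟨R, hR, hstart⟩ := SimpleGraph.ABPath.exists_pairwise_disjoint_forall_exists_start_eq T T'
    (fun i j hij => Set.disjoint_left.mpr fun x hi hj => hdisj i j hij x (hT i hi) (hT j hj))
    (fun i j hij => Set.disjoint_left.mpr (hdisj' i j hij)) (by simp)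
  choose g hg using hstart
  have hg_inj : Function.Injective g := fun i j hij => by
    by_contra hne
    exact hdisj' i j hne _ (P' i).start_mem_support
      (by rw [show a' i = a' j from (hg i).symm.trans (hij ▸ hg j)]; exact (P' j).start_mem_support)
  refine ⟨fun i => (R i).start, fun i => (R i).finish, fun i => (R i).walk,
    fun i => (R i).start_mem, fun i => (R i).finish_mem, fun i => (R i).isPath,
    fun i j hij x hi hj => Set.disjoint_left.mp (hR hij) hi hj,
    fun i x hx hxXY => (R i).eq_start_or_eq_finish hx hxXY, Finset.univ.image g, ?_, ?_⟩
  · rw [Finset.card_image_of_injective _ hg_inj, Finset.card_univ, Fintype.card_fin]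
  · simp only [Finset.mem_image, Finset.mem_univ, true_and]
    rintro _ ⟨j, rfl⟩
    exact hg j ▸ ha' j
end

section
/- Let Z be the graph obtained from the complete bipartite graph K_{t,t−4} with parts {v₁,...,v_t} and {u₁,...,u_{t−4}} by adding the 6 edges (v_i,v_j) for 1 ≤ i < j ≤ 4. Then Z contains K_t as a minor. -/
/-!
Contract each edge `v_i u_{i-4}` (`5 ≤ i ≤ t`). The branch set of `i` is `{v_i}` for `i ≤ 4` and
`{v_i, u_{i-4}}` otherwise. Two of the first four branch sets are joined by one of the six added
edges; any other pair contains some `u_{j-4}`, which is adjacent to every `v_i`.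
-/

/-- A model of `H` in `G`: each vertex of `H` is assigned a nonempty connected
branch set in `G`, distinct vertices get disjoint branch sets, and adjacent
vertices of `H` get branch sets joined by an edge of `G`. -/
def IsMinorModel {V : Type*} {W : Type*} (G : SimpleGraph V) (H : SimpleGraph W)
    (f : W → Set V) : Prop :=
  (∀ w : W, (f w).Nonempty) ∧
  (∀ w : W, (G.induce (f w)).Connected) ∧
  (∀ w w' : W, w ≠ w' → Disjoint (f w) (f w')) ∧
  (∀ w w' : W, H.Adj w w' → ∃ u ∈ f w, ∃ v ∈ f w', G.Adj u v)

/-- `H` is a minor of `G` iff there is a model of `H` in `G`. -/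
def HasMinor {V : Type*} {W : Type*} (G : SimpleGraph V) (H : SimpleGraph W) : Prop :=
  ∃ f : W → Set V, IsMinorModel G H f

/-- The graph `Z`: the complete bipartite graph `K_{t,t-4}` with parts
`{v₁,...,v_t}` (the `inl` vertices) and `{u₁,...,u_{t-4}}` (the `inr` vertices),
together with the 6 additional edges `(v_i, v_j)` for `1 ≤ i < j ≤ 4`. -/
def Zgraph (t : ℕ) : SimpleGraph (Fin t ⊕ Fin (t - 4)) :=
  SimpleGraph.fromRel (fun a b =>
    ((∃ i : Fin t, a = Sum.inl i) ∧ (∃ j : Fin (t - 4), b = Sum.inr j)) ∨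
    (∃ i j : Fin t, a = Sum.inl i ∧ b = Sum.inl j ∧ i.val < 4 ∧ j.val < 4))

theorem SimpleGraph.IsClique.induce_connected {V : Type*} {G : SimpleGraph V} {s : Set V}
    (hs : G.IsClique s) (hne : s.Nonempty) : (G.induce s).Connected := by
  have : Nonempty s := hne.to_subtype
  rw [SimpleGraph.induce_eq_top.2 hs]
  exact SimpleGraph.connected_top

namespace Zgraph

variable {t : ℕ}

theorem adj_inl_inr (i : Fin t) (j : Fin (t - 4)) : (Zgraph t).Adj (.inl i) (.inr j) := by
  simp [Zgraph]

theorem adj_inl_inl {i j : Fin t} (hij : i ≠ j) (hi : i.val < 4) (hj : j.val < 4) :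
    (Zgraph t).Adj (.inl i) (.inl j) := by
  simp [Zgraph, hij, hi, hj]

/-- With `0`-based indices, the branch set of `i` is `{v_i}`, together with `u_{i-4}` when
`4 ≤ i`. -/
def branchSet (t : ℕ) (i : Fin t) : Set (Fin t ⊕ Fin (t - 4)) :=
  {x | x = .inl i ∨ ∃ j : Fin (t - 4), x = .inr j ∧ j.val + 4 = i.val}

theorem isClique_branchSet (i : Fin t) : (Zgraph t).IsClique (branchSet t i) := by
  rintro x (rfl | ⟨j, rfl, hj⟩) y (rfl | ⟨j', rfl, hj'⟩) hxy
  · exact absurd rfl hxy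
  · exact adj_inl_inr i j'
  · exact (adj_inl_inr i j).symm
  · exact absurd (congrArg Sum.inr (Fin.ext (by omega))) hxy

theorem disjoint_branchSet {i i' : Fin t} (h : i ≠ i') :
    Disjoint (branchSet t i) (branchSet t i') := by
  rw [Set.disjoint_left]
  rintro x (rfl | ⟨j, rfl, hj⟩) (hx | ⟨j', hx, hj'⟩)
  · exact h (Sum.inl_injective hx)
  · exact Sum.inl_ne_inr hx
  · exact Sum.inr_ne_inl hx
  · exact h (Fin.ext (by rw [← hj, ← hj', Sum.inr_injective hx]))

theorem exists_adj_branchSet {i i' : Fin t} (h : i ≠ i') :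
    ∃ x ∈ branchSet t i, ∃ y ∈ branchSet t i', (Zgraph t).Adj x y := by
  by_cases hi' : 4 ≤ i'.val
  · exact ⟨.inl i, .inl rfl, .inr ⟨i'.val - 4, by omega⟩, .inr ⟨_, rfl, by simp; omega⟩,
      adj_inl_inr _ _⟩
  by_cases hi : 4 ≤ i.val
  · exact ⟨.inr ⟨i.val - 4, by omega⟩, .inr ⟨_, rfl, by simp; omega⟩, .inl i', .inl rfl,
      (adj_inl_inr _ _).symm⟩
  exact ⟨.inl i, .inl rfl, .inl i', .inl rfl, adj_inl_inl h (by omega) (by omega)⟩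

theorem isMinorModel_branchSet (t : ℕ) :
    IsMinorModel (Zgraph t) (SimpleGraph.completeGraph (Fin t)) (branchSet t) :=
  ⟨fun i => ⟨.inl i, .inl rfl⟩,
    fun i => (isClique_branchSet i).induce_connected ⟨.inl i, .inl rfl⟩,
    fun _ _ => disjoint_branchSet,
    fun _ _ => exists_adj_branchSet⟩

end Zgraph

theorem Zgraph_hasMinor_kt_general (t : ℕ) :
    HasMinor (Zgraph t) (SimpleGraph.completeGraph (Fin t)) :=
  ⟨_, Zgraph.isMinorModel_branchSet t⟩

/-- The graph obtained from `K_{t,t-4}` by adding all 6 edges among the first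
four vertices `v₁,...,v₄` of the large part contains `K_t` as a minor. -/
theorem Zgraph_hasMinor_kt (t : ℕ) (ht : 5 ≤ t) :
    HasMinor (Zgraph t) (SimpleGraph.completeGraph (Fin t)) :=
  Zgraph_hasMinor_kt_general t
end

section
/- Let T be a finite rooted tree in which every vertex has at most D children, and let L be a designated set of leaves (terminals) of T with |L| = n. Then one can find a collection of at least (n−1)/D vertex-disjoint paths in T, each connecting two distinct terminals of L. -/
open SimpleGraph

section Aux

variable {V : Type*} [Fintype V] {root : V} {parent : V → V}

private lemma parent_ne' (hreach : ∀ v : V, ∃ n : ℕ, parent^[n] v = root)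
    {u : V} (hu : u ≠ root) : u ≠ parent u := by
  intro h
  obtain ⟨n, hn⟩ := hreach u
  rw [Function.iterate_fixed h.symm n] at hn
  exact hu hn

private lemma walkUp (hroot : parent root = root)
    (hreach : ∀ v : V, ∃ n : ℕ, parent^[n] v = root) :
    ∀ (m : ℕ) (u v : V), parent^[m] u = v →
      ∃ w : (SimpleGraph.fromRel (fun x y => x ≠ root ∧ parent x = y)).Walk u v,
        ∀ x ∈ w.support, ∃ j ≤ m, parent^[j] u = x := by
  intro m
  induction m with
  | zero =>
    intro u v h
    simp only [Function.iterate_zero, id_eq] at h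
    subst h
    exact ⟨.nil, by simp⟩
  | succ m ih =>
    intro u v h
    by_cases huv : u = v
    · subst huv
      refine ⟨.nil, ?_⟩
      intro x hx
      simp only [Walk.support_nil, List.mem_singleton] at hx
      subst hx
      exact ⟨0, by omega, rfl⟩
    · have hu : u ≠ root := by
        rintro rfl
        exact huv ((Function.iterate_fixed hroot (m+1)).symm.trans h)
      have hadj : (SimpleGraph.fromRel (fun x y => x ≠ root ∧ parent x = y)).Adj u (parent u) :=
        (fromRel_adj _ _ _).mpr ⟨parent_ne' hreach hu, Or.inl ⟨hu, rfl⟩⟩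
      obtain ⟨w, hw⟩ := ih (parent u) v (by rwa [← Function.iterate_succ_apply])
      refine ⟨.cons hadj w, ?_⟩
      intro x hx
      rw [Walk.support_cons, List.mem_cons] at hx
      rcases hx with rfl | hx
      · exact ⟨0, Nat.zero_le _, rfl⟩
      · obtain ⟨j, hj, hjx⟩ := hw x hx
        exact ⟨j + 1, Nat.succ_le_succ hj, by rw [Function.iterate_succ_apply]; exact hjx⟩

private lemma main_pairing (hroot : parent root = root)
    (hreach : ∀ v : V, ∃ n : ℕ, parent^[n] v = root)
    (D : ℕ) (hD : ∀ v : V, {u : V | u ≠ root ∧ parent u = v}.ncard ≤ D) :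
    ∀ L : Finset V, (∀ v ∈ L, ∀ u : V, u ≠ root → parent u ≠ v) →
    ∃ (k : ℕ) (f : Fin k → (a : V) × (b : V) ×
        (SimpleGraph.fromRel (fun x y => x ≠ root ∧ parent x = y)).Walk a b),
      L.card ≤ k * D + 1 ∧
      (∀ i, (f i).1 ∈ L ∧ (f i).2.1 ∈ L ∧ (f i).1 ≠ (f i).2.1) ∧
      (∀ i, (f i).2.2.IsPath) ∧
      (∀ i x, x ∈ (f i).2.2.support → ∃ t ∈ L, ∃ j : ℕ, parent^[j] t = x) ∧
      (∀ i j, i ≠ j → ∀ x, x ∈ (f i).2.2.support → x ∉ (f j).2.2.support) := by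
  classical
  intro L
  induction L using Finset.strongInduction with
  | _ L ih =>
  intro hleaf
  by_cases hL1 : L.card ≤ 1
  · exact ⟨0, fun i => i.elim0, by simpa using hL1, fun i => i.elim0, fun i => i.elim0,
      fun i => i.elim0, fun i => i.elim0⟩
  push_neg at hL1
  -- depth function
  set d : V → ℕ := fun v => Nat.find (hreach v) with hd
  have depth_lt : ∀ c : V, c ≠ root → d (parent c) < d c := by
    intro c hc
    have h0 : d c ≠ 0 := by
      intro h
      exact hc (by simpa using (Nat.find_eq_zero (hreach c)).mp h)
    have hfind : parent^[d c] c = root := Nat.find_spec (hreach c)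
    have hd1 : d c - 1 + 1 = d c := Nat.succ_pred_eq_of_pos (Nat.pos_of_ne_zero h0)
    have hpp : parent^[d c - 1] (parent c) = root := by
      have h5 := Function.iterate_succ_apply parent (d c - 1) c
      rw [Nat.succ_eq_add_one, hd1] at h5
      rw [← h5]
      exact hfind
    have h6 : d (parent c) ≤ d c - 1 := Nat.find_le hpp
    omega
  -- subtree terminals
  set Lsub : V → Finset V := fun v => L.filter (fun t => ∃ m : ℕ, parent^[m] t = v) with hLsub
  have hmem : ∀ w t : V, t ∈ Lsub w ↔ t ∈ L ∧ ∃ m : ℕ, parent^[m] t = w := by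
    intro w t
    rw [hLsub]
    exact Finset.mem_filter
  -- child extraction
  have child : ∀ (v t : V), t ≠ v → (∃ m : ℕ, parent^[m] t = v) →
      ∃ c : V, c ≠ root ∧ parent c = v ∧ ∃ j : ℕ, parent^[j] t = c := by
    intro v t htv hex
    have hm := Nat.find_spec hex
    set m := Nat.find hex with hmdef
    have hm0 : m ≠ 0 := by
      intro h
      rw [h] at hm
      simp at hm
      exact htv hm
    have hm1 : m - 1 + 1 = m := Nat.succ_pred_eq_of_pos (Nat.pos_of_ne_zero hm0)
    refine ⟨parent^[m-1] t, ?_, ?_, m-1, rfl⟩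
    · intro hc
      have hv : v = root := by
        rw [← hm, ← hm1, Function.iterate_succ_apply', hc, hroot]
      exact Nat.find_min hex (show m - 1 < m by omega) (by rw [hc, hv])
    · have h5 := Function.iterate_succ_apply' parent (m - 1) t
      rw [Nat.succ_eq_add_one, hm1] at h5
      exact h5.symm.trans hm
  -- minimal (deepest) vertex with ≥ 2 terminals in its subtree
  set S : Finset V := Finset.univ.filter (fun v => 2 ≤ (Lsub v).card) with hS
  have hrootS : root ∈ S := by
    rw [hS, Finset.mem_filter]
    refine ⟨Finset.mem_univ _, ?_⟩
    have hLr : Lsub root = L := by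
      rw [hLsub]
      exact Finset.filter_true_of_mem (fun t _ => hreach t)
    rw [hLr]
    omega
  obtain ⟨v, hvS, hvmax⟩ := Finset.exists_max_image S d ⟨root, hrootS⟩
  have hv2 : 2 ≤ (Lsub v).card := by
    rw [hS, Finset.mem_filter] at hvS
    exact hvS.2
  have hchild_le : ∀ c : V, c ≠ root → parent c = v → (Lsub c).card ≤ 1 := by
    intro c hc hpc
    by_contra h
    push_neg at h
    have hcS : c ∈ S := by
      rw [hS, Finset.mem_filter]
      exact ⟨Finset.mem_univ _, h⟩
    have h1 := hvmax c hcS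
    have h2 := depth_lt c hc
    rw [hpc] at h2
    omega
  have hvL : v ∉ L := by
    intro hvL
    obtain ⟨t, ht, htv⟩ := Finset.exists_mem_ne (by omega : 1 < (Lsub v).card) v
    obtain ⟨c, hc, hpc, _⟩ := child v t htv ((hmem v t).mp ht).2
    exact hleaf v hvL c hc hpc
  have hvne : ∀ t ∈ Lsub v, t ≠ v := fun t ht htv => hvL (htv ▸ ((hmem v t).mp ht).1)
  -- at most D terminals in the subtree of v
  set C : Finset V := Finset.univ.filter (fun u => u ≠ root ∧ parent u = v) with hC
  have hCD : C.card ≤ D := by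
    have h := hD v
    rwa [show ({u : V | u ≠ root ∧ parent u = v} : Set V) = ↑C by
      rw [hC]; ext x; simp, Set.ncard_coe_finset] at h
  have hsubC : Lsub v ⊆ C.biUnion (fun c => Lsub c) := by
    intro t ht
    obtain ⟨c, hc, hpc, j, hj⟩ := child v t (hvne t ht) ((hmem v t).mp ht).2
    refine Finset.mem_biUnion.mpr ⟨c, ?_, (hmem c t).mpr ⟨((hmem v t).mp ht).1, j, hj⟩⟩
    rw [hC, Finset.mem_filter]
    exact ⟨Finset.mem_univ _, hc, hpc⟩
  have hLsubD : (Lsub v).card ≤ D := by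
    calc (Lsub v).card ≤ (C.biUnion (fun c => Lsub c)).card := Finset.card_le_card hsubC
      _ ≤ ∑ c ∈ C, (Lsub c).card := Finset.card_biUnion_le
      _ ≤ ∑ _c ∈ C, 1 := Finset.sum_le_sum (fun c hcC => by
          rw [hC, Finset.mem_filter] at hcC
          exact hchild_le c hcC.2.1 hcC.2.2)
      _ = C.card := by simp
      _ ≤ D := hCD
  -- pick two terminals and connect them within the subtree of v
  obtain ⟨a₀, ha₀, b₀, hb₀, hab⟩ := Finset.one_lt_card.mp (by omega : 1 < (Lsub v).card)
  obtain ⟨ma, hma⟩ := ((hmem v a₀).mp ha₀).2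
  obtain ⟨mb, hmb⟩ := ((hmem v b₀).mp hb₀).2
  obtain ⟨w₁, hw₁⟩ := walkUp hroot hreach ma a₀ v hma
  obtain ⟨w₂, hw₂⟩ := walkUp hroot hreach mb b₀ v hmb
  set P₀ := (w₁.append w₂.reverse).bypass with hP₀
  have hP₀path : P₀.IsPath := Walk.bypass_isPath _
  have hP₀supp : ∀ x ∈ P₀.support,
      ((∃ j : ℕ, parent^[j] a₀ = x) ∨ (∃ j : ℕ, parent^[j] b₀ = x)) ∧
      (∃ i : ℕ, parent^[i] x = v) := by
    intro x hx
    have hx' := Walk.support_bypass_subset _ hx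
    rw [Walk.mem_support_append_iff] at hx'
    rcases hx' with hx' | hx'
    · obtain ⟨j, hj, hjx⟩ := hw₁ x hx'
      refine ⟨Or.inl ⟨j, hjx⟩, ma - j, ?_⟩
      rw [← hjx, ← Function.iterate_add_apply, show ma - j + j = ma by omega]
      exact hma
    · rw [Walk.support_reverse, List.mem_reverse] at hx'
      obtain ⟨j, hj, hjx⟩ := hw₂ x hx'
      refine ⟨Or.inr ⟨j, hjx⟩, mb - j, ?_⟩
      rw [← hjx, ← Function.iterate_add_apply, show mb - j + j = mb by omega]
      exact hmb
  -- recurse on remaining terminals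
  have hsubL : Lsub v ⊆ L := fun t ht => ((hmem v t).mp ht).1
  set L' := L \ Lsub v with hL'
  have hss : L' ⊂ L := Finset.sdiff_ssubset hsubL ⟨a₀, ha₀⟩
  obtain ⟨k, f, hcard, hends, hpaths, hanc, hdisj⟩ :=
    ih L' hss (fun x hx u hu => hleaf x (Finset.mem_sdiff.mp hx).1 u hu)
  have hnotdesc : ∀ i x, x ∈ (f i).2.2.support → ¬ ∃ n : ℕ, parent^[n] x = v := by
    rintro i x hx ⟨n, hn⟩
    obtain ⟨t, htL', j, hj⟩ := hanc i x hx
    have htsub : t ∈ Lsub v := (hmem v t).mpr ⟨(Finset.mem_sdiff.mp htL').1, n + j, by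
      rw [Function.iterate_add_apply, hj, hn]⟩
    exact (Finset.mem_sdiff.mp htL').2 htsub
  refine ⟨k + 1, Fin.cons ⟨a₀, b₀, P₀⟩ f, ?_, ?_, ?_, ?_, ?_⟩
  · have h1 : L'.card = L.card - (Lsub v).card := Finset.card_sdiff_of_subset hsubL
    have h2 : (Lsub v).card ≤ L.card := Finset.card_le_card hsubL
    have h3 : (k + 1) * D + 1 = (k * D + 1) + D := by ring
    omega
  · intro i
    induction i using Fin.cases with
    | zero =>
      exact ⟨hsubL ha₀, hsubL hb₀, hab⟩
    | succ i =>
      obtain ⟨h1, h2, h3⟩ := hends i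
      exact ⟨(Finset.mem_sdiff.mp h1).1, (Finset.mem_sdiff.mp h2).1, h3⟩
  · intro i
    induction i using Fin.cases with
    | zero => exact hP₀path
    | succ i => exact hpaths i
  · intro i
    induction i using Fin.cases with
    | zero =>
      intro x hx
      rcases (hP₀supp x hx).1 with ⟨j, hj⟩ | ⟨j, hj⟩
      · exact ⟨a₀, hsubL ha₀, j, hj⟩
      · exact ⟨b₀, hsubL hb₀, j, hj⟩
    | succ i =>
      intro x hx
      obtain ⟨t, htL', j, hj⟩ := hanc i x hx
      exact ⟨t, (Finset.mem_sdiff.mp htL').1, j, hj⟩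
  · intro i
    induction i using Fin.cases with
    | zero =>
      intro j
      induction j using Fin.cases with
      | zero => intro hij; exact absurd rfl hij
      | succ j =>
        intro _ x hx hx'
        exact hnotdesc j x hx' (hP₀supp x hx).2
    | succ i =>
      intro j
      induction j using Fin.cases with
      | zero =>
        intro _ x hx hx'
        exact hnotdesc i x hx (hP₀supp x hx').2
      | succ j =>
        intro hij x hx
        exact hdisj i j (fun h => hij (congrArg Fin.succ h)) x hx

end Aux

/-- Let `T` be a finite rooted tree (given by a parent function under which every
vertex reaches the root) in which every vertex has at most `D` children, and let
`L` be a set of `n` leaves (terminals). Then there are at least `(n - 1) / D`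
vertex-disjoint paths in `T`, each connecting two distinct terminals of `L`. -/
theorem tree_terminal_pairing {V : Type*} [Fintype V] (root : V) (parent : V → V)
    (hroot : parent root = root)
    (hreach : ∀ v : V, ∃ n : ℕ, parent^[n] v = root)
    (D : ℕ) (hD : ∀ v : V, {u : V | u ≠ root ∧ parent u = v}.ncard ≤ D)
    (L : Finset V) (hleaf : ∀ v ∈ L, ∀ u : V, u ≠ root → parent u ≠ v) :
    ∃ (k : ℕ) (a b : Fin k → V)
      (P : ∀ i, (SimpleGraph.fromRel (fun x y => x ≠ root ∧ parent x = y)).Walk (a i) (b i)),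
      ((L.card : ℝ) - 1) / (D : ℝ) ≤ (k : ℝ) ∧
      (∀ i, a i ∈ L ∧ b i ∈ L ∧ a i ≠ b i) ∧
      (∀ i, (P i).IsPath) ∧
      (∀ i j, i ≠ j → ∀ v, v ∈ (P i).support → v ∉ (P j).support) := by
  obtain ⟨k, f, hcard, hends, hpaths, _hanc, hdisj⟩ := main_pairing hroot hreach D hD L hleaf
  refine ⟨k, fun i => (f i).1, fun i => (f i).2.1, fun i => (f i).2.2, ?_, hends, hpaths, hdisj⟩
  rcases Nat.eq_zero_or_pos D with hD0 | hD0
  · subst hD0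
    simp
  · rw [div_le_iff₀ (by positivity)]
    have h : (L.card : ℝ) ≤ k * D + 1 := by exact_mod_cast hcard
    linarith
end

section
/- Let G' be the (h × r) grid and let x = v(i,j), x' = v(i',j') be two vertices of G' with t < i, i' ≤ h − t and t < |j − j'| (separated by at least t+1 columns), where 2t < h. Then for any labels ℓ, ℓ' ∈ {1,...,t}, passing paths through x and x' can be arranged: there exist t vertex-disjoint paths in G', each joining a vertex in the first column to a vertex in the last column, such that the ℓ-th path (in top-to-bottom order at the first column) contains x and the ℓ'-th path contains x'. -/
/-!
Path `i` runs along row `s + i` near `x` and along row `s' + i` near `x'`, where `s = x.1 - ℓ` and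
`s' = x'.1 - ℓ'` put `x` and `x'` into the `ℓ`-th and `ℓ'`-th rows of their bands. Between the two
vertices each path makes one vertical move from its first band to its second, in a column of its
own: the lowest path moves first when the bands go down and the highest first when they go up, so
the vertical segments of different paths are separated and the paths stay disjoint. The `t + 1`
columns between `x` and `x'` leave room for `t` distinct switching columns.
-/

open SimpleGraph

namespace gridGraph

variable {h r : ℕ}

lemma adj_of_row_succ {u v : Fin h} (c : Fin r) (huv : u.val + 1 = v.val) :
    (gridGraph h r).Adj (u, c) (v, c) := by
  rw [gridGraph, fromRel_adj]
  exact ⟨fun e => by simp [Fin.ext_iff] at e; omega, Or.inl (Or.inr ⟨rfl, huv⟩)⟩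

lemma adj_of_col_succ (u : Fin h) {c d : Fin r} (hcd : c.val + 1 = d.val) :
    (gridGraph h r).Adj (u, c) (u, d) := by
  rw [gridGraph, fromRel_adj]
  exact ⟨fun e => by simp [Fin.ext_iff] at e; omega, Or.inl (Or.inl ⟨rfl, hcd⟩)⟩

lemma exists_isPath_column_Icc (c : Fin r) {a b : Fin h} (hab : a ≤ b) :
    ∃ W : (gridGraph h r).Walk (a, c) (b, c),
      W.IsPath ∧ ∀ p ∈ W.support, p.2 = c ∧ p.1 ∈ Set.Icc a b := by
  obtain ⟨b, hb⟩ := b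
  replace hab : a.val ≤ b := hab
  revert hb
  induction b, hab using Nat.le_induction with
  | base => exact fun _ => ⟨.nil, .nil, by simp⟩
  | succ b hab ih =>
    intro hb
    obtain ⟨W, hW, hsupp⟩ := ih (by omega)
    have hadj := adj_of_row_succ (u := ⟨b, by omega⟩) (v := ⟨b + 1, hb⟩) c rfl
    refine ⟨W.concat hadj, hW.concat (fun hmem => ?_) hadj, fun p hp => ?_⟩
    · have := (hsupp _ hmem).2.2
      simp [Fin.le_def] at this
    · rw [Walk.support_concat, List.mem_append, List.mem_singleton] at hp
      rcases hp with hp | rfl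
      · obtain ⟨hpc, hap, hpb⟩ := hsupp p hp
        exact ⟨hpc, hap, hpb.trans (Fin.le_def.2 (Nat.le_succ b))⟩
      · exact ⟨rfl, Fin.le_def.2 (by simpa using hab.step), le_rfl⟩

lemma exists_isPath_column (c : Fin r) (a b : Fin h) :
    ∃ W : (gridGraph h r).Walk (a, c) (b, c),
      W.IsPath ∧ ∀ p ∈ W.support, p.2 = c ∧ p.1 ∈ Set.uIcc a b := by
  rcases le_total a b with hab | hba
  · obtain ⟨W, hW, hsupp⟩ := exists_isPath_column_Icc c hab
    exact ⟨W, hW, fun p hp => (hsupp p hp).imp_right (Set.Icc_subset_uIcc ·)⟩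
  · obtain ⟨W, hW, hsupp⟩ := exists_isPath_column_Icc c hba
    refine ⟨W.reverse, hW.reverse, fun p hp => ?_⟩
    rw [Walk.support_reverse, List.mem_reverse] at hp
    exact (hsupp p hp).imp_right (Set.Icc_subset_uIcc' ·)

/-- The staircase of `f` enters column `j` in row `f (j - 1)` and leaves it in row `f j`; in
column `0` the truncated `0 - 1 = 0` makes its segment the single vertex in row `f 0`. -/
lemma exists_isPath_staircase (f : ℕ → Fin h) (c : ℕ) (hc : c < r) :
    ∃ W : (gridGraph h r).Walk (f 0, ⟨0, by omega⟩) (f c, ⟨c, hc⟩), W.IsPath ∧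
      (∀ p ∈ W.support, p.2.val ≤ c ∧ p.1 ∈ Set.uIcc (f (p.2.val - 1)) (f p.2.val)) ∧
      ∀ p : Fin h × Fin r, p.2.val ≤ c → p.1 = f p.2.val → p ∈ W.support := by
  induction c with
  | zero =>
    refine ⟨.nil, .nil, fun p hp => ?_, fun p hp hpf => ?_⟩
    · obtain rfl := List.mem_singleton.1 hp
      simp
    · have hp0 : p.2 = ⟨0, hc⟩ := Fin.ext (Nat.le_zero.1 hp)
      simp [Prod.ext_iff, hp0, hpf]
  | succ n ih =>
    obtain ⟨W, hW, hWsupp, hWmem⟩ := ih (by omega)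
    obtain ⟨V, hV, hVsupp⟩ := exists_isPath_column ⟨n + 1, hc⟩ (f n) (f (n + 1))
    have hadj := adj_of_col_succ (f n) (c := ⟨n, by omega⟩) (d := ⟨n + 1, hc⟩) rfl
    have hsupp : (W.append (.cons hadj V)).support = W.support ++ V.support := by
      rw [Walk.support_append, Walk.support_cons, List.tail_cons]
    refine ⟨W.append (.cons hadj V), ?_, fun p hp => ?_, fun p hp hpf => ?_⟩
    · rw [Walk.isPath_def, hsupp, List.nodup_append]
      refine ⟨hW.support_nodup, hV.support_nodup, fun p hpW q hqV hpq => ?_⟩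
      have := (hWsupp p hpW).1
      rw [hpq, (hVsupp q hqV).1] at this
      simp at this
    · rw [hsupp, List.mem_append] at hp
      rcases hp with hp | hp
      · exact (hWsupp p hp).imp_left (·.trans n.le_succ)
      · obtain ⟨hpc, hpf⟩ := hVsupp p hp
        rw [hpc]
        exact ⟨le_rfl, hpf⟩
    · rw [hsupp, List.mem_append]
      rcases (Nat.le_succ_iff.1 hp) with hpn | hpn
      · exact .inl (hWmem p hpn hpf)
      · have : p = (f (n + 1), ⟨n + 1, hc⟩) := Prod.ext (hpf.trans (by rw [hpn])) (Fin.ext hpn)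
        exact .inr (this ▸ V.end_mem_support)

lemma exists_disjoint_staircase_paths {t : ℕ} (hr : 0 < r) (f : Fin t → ℕ → Fin h)
    (hsep : ∀ i k, i < k → ∀ j, f i (j - 1) ⊔ f i j < f k (j - 1) ⊓ f k j) :
    ∃ (a c : Fin t → Fin h × Fin r) (P : ∀ i, (gridGraph h r).Walk (a i) (c i)),
      (∀ i, (a i).2.val = 0) ∧ (∀ i, (c i).2.val = r - 1) ∧ StrictMono (fun i => (a i).1) ∧
      (∀ i, (P i).IsPath) ∧ (∀ i j, i ≠ j → ∀ v, v ∈ (P i).support → v ∉ (P j).support) ∧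
      ∀ i (p : Fin h × Fin r), p.1 = f i p.2.val → p ∈ (P i).support := by
  choose W hW hsupp hmem using
    fun i => exists_isPath_staircase (f i) (r - 1) (Nat.sub_lt hr one_pos)
  have hdisj : ∀ i k, i < k → ∀ v ∈ (W i).support, v ∉ (W k).support := fun i k hik v hvi hvk =>
    (hsep i k hik v.2.val).not_ge ((hsupp k v hvk).2.1.trans (hsupp i v hvi).2.2)
  refine ⟨fun i => (f i 0, ⟨0, hr⟩), fun i => (f i (r - 1), ⟨r - 1, by omega⟩), W,
    fun _ => rfl, fun _ => rfl, fun i k hik => by simpa using hsep i k hik 0, hW,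
    fun i k hik v hvi hvk => ?_, fun i p hp => hmem i p (Nat.le_sub_one_of_lt p.2.isLt) hp⟩
  rcases hik.lt_or_gt with hik | hki
  · exact hdisj i k hik v hvi hvk
  · exact hdisj k i hki v hvk hvi

def switchCol (t s s' c i : ℕ) : ℕ := if s ≤ s' then c + t - i else c + 1 + i

def bandRow (t s s' c i j : ℕ) : ℕ := if j < switchCol t s s' c i then s + i else s' + i

section bandRow

variable {t s s' c i j : ℕ}

lemma bandRow_eq_left (hi : i < t) (hj : j ≤ c) : bandRow t s s' c i j = s + i := by
  unfold bandRow switchCol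
  split_ifs <;> omega

lemma bandRow_eq_right (hi : i < t) (hj : c + t ≤ j) : bandRow t s s' c i j = s' + i := by
  unfold bandRow switchCol
  split_ifs <;> omega

lemma bandRow_lt (hi : i < t) (hs : s + t ≤ h) (hs' : s' + t ≤ h) :
    bandRow t s s' c i j < h := by
  unfold bandRow
  split_ifs <;> omega

lemma max_bandRow_lt_min {k : ℕ} (hik : i < k) (hk : k < t) :
    max (bandRow t s s' c i (j - 1)) (bandRow t s s' c i j) <
      min (bandRow t s s' c k (j - 1)) (bandRow t s s' c k j) := by
  unfold bandRow switchCol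
  split_ifs <;> omega

end bandRow

lemma exists_paths_through_of_col_add_lt {t : ℕ} {x x' : Fin h × Fin r}
    (hx_row : t ≤ x.1.val ∧ x.1.val + t < h) (hx'_row : t ≤ x'.1.val ∧ x'.1.val + t < h)
    (hcol : x.2.val + t < x'.2.val) (l l' : Fin t) :
    ∃ (a c : Fin t → Fin h × Fin r)
      (P : ∀ i, (gridGraph h r).Walk (a i) (c i)),
      (∀ i, (a i).2.val = 0) ∧ (∀ i, (c i).2.val = r - 1) ∧
      StrictMono (fun i => (a i).1) ∧
      (∀ i, (P i).IsPath) ∧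
      (∀ i j, i ≠ j → ∀ v, v ∈ (P i).support → v ∉ (P j).support) ∧
      x ∈ (P l).support ∧ x' ∈ (P l').support := by
  set s := x.1.val - l.val
  set s' := x'.1.val - l'.val
  have hrow (i : Fin t) (j : ℕ) : bandRow t s s' x.2 i j < h :=
    bandRow_lt i.isLt (by omega) (by omega)
  obtain ⟨a, c, P, ha, hc, hmono, hP, hdisj, hmem⟩ :=
    exists_disjoint_staircase_paths x.2.pos (fun i j => ⟨bandRow t s s' x.2 i j, hrow i j⟩)
      fun i k hik j => Fin.lt_def.2 (max_bandRow_lt_min hik k.isLt)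
  refine ⟨a, c, P, ha, hc, hmono, hP, hdisj,
    hmem l x (Fin.ext ((bandRow_eq_left l.isLt le_rfl).trans ?_).symm),
    hmem l' x' (Fin.ext ((bandRow_eq_right l'.isLt hcol.le).trans ?_).symm)⟩ <;> omega

end gridGraph

theorem grid_paths_through_two_vertices_general (h r t : ℕ)
    (x x' : Fin h × Fin r)
    (hx_row : t ≤ x.1.val ∧ x.1.val + t < h)
    (hx'_row : t ≤ x'.1.val ∧ x'.1.val + t < h)
    (hsep : (t : ℤ) < |(x.2.val : ℤ) - (x'.2.val : ℤ)|)
    (l l' : Fin t) :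
    ∃ (a c : Fin t → Fin h × Fin r)
      (P : ∀ i, (gridGraph h r).Walk (a i) (c i)),
      (∀ i, (a i).2.val = 0) ∧ (∀ i, (c i).2.val = r - 1) ∧
      StrictMono (fun i => (a i).1) ∧
      (∀ i, (P i).IsPath) ∧
      (∀ i j, i ≠ j → ∀ v, v ∈ (P i).support → v ∉ (P j).support) ∧
      x ∈ (P l).support ∧ x' ∈ (P l').support := by
  rcases lt_abs.1 hsep with hcol | hcol
  · obtain ⟨a, c, P, ha, hc, hmono, hP, hdisj, hx', hx⟩ :=
      gridGraph.exists_paths_through_of_col_add_lt hx'_row hx_row (by omega) l' l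
    exact ⟨a, c, P, ha, hc, hmono, hP, hdisj, hx, hx'⟩
  · exact gridGraph.exists_paths_through_of_col_add_lt hx_row hx'_row (by omega) l l'

/-- Let `x, x'` be two vertices of the `(h × r)` grid (rows and columns
`0`-indexed) whose rows lie strictly between the top `t` rows and the bottom `t`
rows, separated by at least `t + 1` columns, with `2t < h`. Then for any labels
`ℓ, ℓ' ∈ Fin t` there are `t` vertex-disjoint paths, each joining a vertex of
the first column to a vertex of the last column, listed in top-to-bottom order
of their first-column endpoints, such that the `ℓ`-th path contains `x` and the
`ℓ'`-th path contains `x'`. -/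
theorem grid_paths_through_two_vertices (h r t : ℕ) (hht : 2 * t < h)
    (x x' : Fin h × Fin r)
    (hx_row : t ≤ x.1.val ∧ x.1.val + t < h)
    (hx'_row : t ≤ x'.1.val ∧ x'.1.val + t < h)
    (hsep : (t : ℤ) < |(x.2.val : ℤ) - (x'.2.val : ℤ)|)
    (l l' : Fin t) :
    ∃ (a c : Fin t → Fin h × Fin r)
      (P : ∀ i, (gridGraph h r).Walk (a i) (c i)),
      (∀ i, (a i).2.val = 0) ∧ (∀ i, (c i).2.val = r - 1) ∧
      StrictMono (fun i => (a i).1) ∧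
      (∀ i, (P i).IsPath) ∧
      (∀ i j, i ≠ j → ∀ v, v ∈ (P i).support → v ∉ (P j).support) ∧
      x ∈ (P l).support ∧ x' ∈ (P l').support :=
  grid_paths_through_two_vertices_general h r t x x' hx_row hx'_row hsep l l'
end
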